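/- Every f-smooth word over {a,b} occurs as a factor of some r-smooth word: for all u ∈ C_f^∞ there exists v with |v| ≥ a + b such that vu ∈ C_r^∞. -/

import Mathlib

namespace SmoothWords

/-- Complement of a letter over the alphabet `{a, b}`. -/
def flip (a b c : ℕ) : ℕ := if c = a then b else a

/-- Run-length encoding of a finite word: list of (letter, exponent) pairs. -/
def runs : List ℕ → List (ℕ × ℕ)
  | [] => []
  | c :: t =>
    match runs t with
    | [] => [(c, 1)]
    | (d, k) :: r => if c = d then (c, k + 1) :: r else (c, 1) :: (d, k) :: r

/-- The exponents of the canonical run-length factorization. -/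
def exps (u : List ℕ) : List ℕ := (runs u).map Prod.snd

/-- Boundary cut used by the finite derivatives. -/
def cut (a b p : ℕ) : List ℕ := if p ≤ a then [] else [b]

/-- The finite derivative `D_f`. -/
def Df (a b : ℕ) (u : List ℕ) : List ℕ :=
  match exps u with
  | [] => []
  | [p] => cut a b p
  | p :: q :: rest =>
      cut a b p ++ (q :: rest).dropLast ++ cut a b ((q :: rest).getLast (List.cons_ne_nil _ _))

/-- `u` is f-derivable: letters in `{a,b}`, inner run exponents in `{a,b}`,
boundary run exponents in `[1, b]`. -/
def Cf1 (a b : ℕ) (u : List ℕ) : Prop :=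
  (∀ c ∈ u, c = a ∨ c = b) ∧
  (∀ p ∈ exps u, p ≤ b) ∧
  (∀ p ∈ ((exps u).drop 1).dropLast, p = a ∨ p = b)

/-- `u` is f-smooth: all iterated finite derivatives are f-derivable
(equivalently, some iterate is `ε`). -/
def FSmooth (a b : ℕ) (u : List ℕ) : Prop := ∀ n, Cf1 a b ((Df a b)^[n] u)

/-- The r-derivative `D_r`: keeps all exponents but cuts the last one. -/
def Dr (a b : ℕ) (u : List ℕ) : List ℕ :=
  match exps u with
  | [] => []
  | p :: rest =>
      (p :: rest).dropLast ++ cut a b ((p :: rest).getLast (List.cons_ne_nil _ _))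

/-- `u` is r-derivable. -/
def Cr1 (a b : ℕ) (u : List ℕ) : Prop :=
  (∀ c ∈ u, c = a ∨ c = b) ∧
  (∀ p ∈ exps u, p ≤ b) ∧
  (∀ p ∈ (exps u).dropLast, p = a ∨ p = b)

/-- `u` is r-smooth. -/
def RSmooth (a b : ℕ) (u : List ℕ) : Prop := ∀ n, Cr1 a b ((Dr a b)^[n] u)

/-- `y` is the derivative of the infinite word `x`: `x = x₀^{y₀} x̄₀^{y₁} x₀^{y₂} ⋯`
with all `y i ∈ {a, b}` (in particular `x` is derivable). -/
def DerivesTo (a b : ℕ) (x y : ℕ → ℕ) : Prop :=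
  (∀ i, y i = a ∨ y i = b) ∧
  ∃ S : ℕ → ℕ, S 0 = 0 ∧ (∀ k, S (k + 1) = S k + y k) ∧
    ∀ k i, S k ≤ i → i < S (k + 1) → x i = (flip a b)^[k] (x 0)

/-- An infinite word over `{a,b}` is smooth if it is infinitely derivable. -/
def Smooth (a b : ℕ) (x : ℕ → ℕ) : Prop :=
  (∀ i, x i = a ∨ x i = b) ∧
  ∃ X : ℕ → ℕ → ℕ, X 0 = x ∧ ∀ n, DerivesTo a b (X n) (X (n + 1))

/-- Auxiliary for the f-primitives: alternate blocks with given exponents,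
ending with a block of exponent `a`. -/
def pfAux (a b : ℕ) : ℕ → List ℕ → List ℕ
  | c, [] => List.replicate a c
  | c, p :: t => List.replicate p c ++ pfAux a b (flip a b c) t

/-- The f-primitive `P_{f,c}`. -/
def Pf (a b c : ℕ) (u : List ℕ) : List ℕ :=
  if c = a then List.replicate a a ++ pfAux a b b u
  else (List.replicate a a ++ pfAux a b b u).map (flip a b)

/-- `u` is a bispecial f-smooth word. -/
def Bispecial (a b : ℕ) (u : List ℕ) : Prop :=
  FSmooth a b u ∧ FSmooth a b (a :: u) ∧ FSmooth a b (b :: u) ∧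
    FSmooth a b (u ++ [a]) ∧ FSmooth a b (u ++ [b])

open Classical in
/-- The multiplicity `m(u) = |{aua,aub,bua,bub} ∩ C_f^∞| - 3`. -/
noncomputable def mult (a b : ℕ) (u : List ℕ) : ℤ :=
  (if FSmooth a b (a :: u ++ [a]) then 1 else 0) +
  (if FSmooth a b (a :: u ++ [b]) then 1 else 0) +
  (if FSmooth a b (b :: u ++ [a]) then 1 else 0) +
  (if FSmooth a b (b :: u ++ [b]) then 1 else 0) - 3

/-- The vertex of the tree `T` indexed by the path `s` from the root `ε`
(`false` = child by `P_{f,a}`, `true` = child by `P_{f,b}`). -/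
def node (a b : ℕ) : List Bool → List ℕ
  | [] => []
  | c :: s => Pf a b (if c then b else a) (node a b s)

/-- Total length `f(i) = ∑_{u ∈ T_i} |u|` of generation `i` of `T`. -/
def totalLen (a b i : ℕ) : ℕ :=
  ∑ s : Fin i → Bool, (node a b (List.ofFn s)).length

/-- Generation `i` of the tree `T`, as a finite set of words. -/
def genSet (a b i : ℕ) : Finset (List ℕ) :=
  (Finset.univ : Finset (Fin i → Bool)).image fun s => node a b (List.ofFn s)

/-- `b_i(n) = |T_i ∩ A^n|`. -/
def bfun (a b i n : ℕ) : ℕ := ((genSet a b i).filter fun u => u.length = n).card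

/-- `s_i(n) = ∑_{m<n} b_i(m)`. -/
def sfun (a b i n : ℕ) : ℕ := ∑ m ∈ Finset.range n, bfun a b i m

/-- `p_i(n) = ∑_{m<n} s_i(m)`. -/
def pfun (a b i n : ℕ) : ℕ := ∑ m ∈ Finset.range n, sfun a b i m

/-- `p(n) = ∑_i p_i(n)`. -/
noncomputable def pTot (a b n : ℕ) : ℝ := ∑' i : ℕ, (pfun a b i n : ℝ)

/-- `l_i`, the minimal length of a word of generation `i` of `T`. -/
noncomputable def li (a b i : ℕ) : ℕ :=
  sInf {m | ∃ s : Fin i → Bool, (node a b (List.ofFn s)).length = m}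

/-- `u` is a factor of the infinite word `x`. -/
def FactorOf (u : List ℕ) (x : ℕ → ℕ) : Prop :=
  ∃ i, u = (List.range u.length).map fun j => x (i + j)

/-! Strong induction on `|u|`, for a prescribed lower bound `N` on `|v|` instead of `a + b`.
If `u ≠ ε` has exponents `p₁ ⋯ pₙ`, then `D_f(u) = cut(p₁) p₂ ⋯ pₙ₋₁ cut(pₙ)` is shorter, so some
`z` with `|z| > N` makes `z D_f(u)` r-smooth. Stretching the first run of `u` to an exponent
`e ∈ {a, b}` and prepending alternating runs with exponents `y` yields `vu` with exponents
`y e p₂ ⋯ pₙ`, hence `D_r(vu) = y e p₂ ⋯ pₙ₋₁ cut(pₙ)`. Taking `y e = z cut(p₁)` (for `n = 1`: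
`y = z` and `cut(e) = cut(p₁)`) gives `D_r(vu) = z D_f(u)` with `|v| ≥ |z| - 1`. For `u = ε`,
the word with exponents `z a` has r-derivative `z`, which makes r-smooth words arbitrarily long. -/

variable {a b : ℕ}

lemma runs_cons_cases (c : ℕ) (t : List ℕ) :
    runs (c :: t) = (c, 1) :: runs t ∨
      ∃ k r, runs t = (c, k) :: r ∧ runs (c :: t) = (c, k + 1) :: r := by
  rcases h : runs t with _ | ⟨⟨d, k⟩, r⟩
  · simp [runs, h]
  · by_cases hcd : c = d
    · subst hcd; simp [runs, h]
    · simp [runs, h, hcd]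

lemma exists_runs_cons (c : ℕ) (t : List ℕ) : ∃ k r, runs (c :: t) = (c, k) :: r := by
  rcases runs_cons_cases c t with h | ⟨k, r, -, h⟩
  exacts [⟨1, _, h⟩, ⟨k + 1, r, h⟩]

lemma one_le_of_mem_exps {u : List ℕ} : ∀ p ∈ exps u, 1 ≤ p := by
  induction u with
  | nil => simp [exps, runs]
  | cons c t ih =>
    rcases runs_cons_cases c t with h | ⟨k, r, hr, h⟩ <;> simp_all [exps] <;> aesop

lemma sum_exps (u : List ℕ) : (exps u).sum = u.length := by
  induction u with
  | nil => simp [exps, runs]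
  | cons c t ih =>
    rcases runs_cons_cases c t with h | ⟨k, r, hr, h⟩ <;> simp_all [exps] <;> omega

lemma runs_cons_of_head?_ne {c : ℕ} {t : List ℕ} (h : ∀ x ∈ t.head?, x ≠ c) :
    runs (c :: t) = (c, 1) :: runs t := by
  rcases runs_cons_cases c t with h' | ⟨k, r, hr, -⟩
  · exact h'
  · cases t with
    | nil => simp [runs] at hr
    | cons d s =>
      obtain ⟨k', r', hd⟩ := exists_runs_cons d s
      rw [hd] at hr
      exact absurd (congrArg Prod.fst (List.cons.inj hr).1) (h d rfl)

lemma runs_replicate_append_of_runs_eq {c p : ℕ} {t : List ℕ} {r : List (ℕ × ℕ)}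
    (h : runs t = (c, p) :: r) (k : ℕ) :
    runs (List.replicate k c ++ t) = (c, p + k) :: r := by
  induction k with
  | zero => simpa using h
  | succ k ih => simp [List.replicate_succ, runs, ih, Nat.add_assoc]

lemma runs_replicate_append {c k : ℕ} {t : List ℕ} (hk : 1 ≤ k) (h : ∀ x ∈ t.head?, x ≠ c) :
    runs (List.replicate k c ++ t) = (c, k) :: runs t := by
  obtain ⟨k, rfl⟩ := Nat.exists_eq_add_of_le' hk
  rw [List.replicate_succ', List.append_assoc, List.singleton_append,
    runs_replicate_append_of_runs_eq (runs_cons_of_head?_ne h), Nat.add_comm]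

lemma mem_of_runs_eq_cons {u : List ℕ} {c p : ℕ} {R : List (ℕ × ℕ)}
    (h : runs u = (c, p) :: R) : c ∈ u := by
  cases u with
  | nil => simp [runs] at h
  | cons d t =>
    obtain ⟨k, r, hd⟩ := exists_runs_cons d t
    rw [hd] at h
    obtain rfl : d = c := congrArg Prod.fst (List.cons.inj h).1
    simp

lemma Dr_of_exps_eq_concat {w X : List ℕ} {p : ℕ} (h : exps w = X ++ [p]) :
    Dr a b w = X ++ cut a b p := by
  unfold Dr
  rw [h]
  cases X <;> simp [List.dropLast_cons_of_ne_nil]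

lemma Df_of_exps_eq_singleton {u : List ℕ} {p : ℕ} (h : exps u = [p]) :
    Df a b u = cut a b p := by
  unfold Df
  rw [h]

lemma Df_of_exps_eq_cons_concat {u X : List ℕ} {p q : ℕ} (h : exps u = p :: (X ++ [q])) :
    Df a b u = cut a b p ++ X ++ cut a b q := by
  unfold Df
  rw [h]
  cases X <;> simp [List.dropLast_cons_of_ne_nil]

lemma flip_eq_or (c : ℕ) : flip a b c = a ∨ flip a b c = b := by
  unfold flip; split_ifs <;> simp

lemma flip_ne_self (hab : a ≠ b) {c : ℕ} (hc : c = a ∨ c = b) : flip a b c ≠ c := by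
  unfold flip; split_ifs <;> grind

lemma exps_replicate_append {c k : ℕ} {t : List ℕ} (hk : 1 ≤ k) (h : ∀ x ∈ t.head?, x ≠ c) :
    exps (List.replicate k c ++ t) = k :: exps t := by
  simp [exps, runs_replicate_append hk h]

lemma exists_exps_append (hab : a ≠ b) {w : List ℕ} (hw : ∀ x ∈ w, x = a ∨ x = b)
    {y : List ℕ} (hy : ∀ k ∈ y, 1 ≤ k) :
    ∃ v : List ℕ, v.length = y.sum ∧ (∀ x ∈ v, x = a ∨ x = b) ∧
      exps (v ++ w) = y ++ exps w := by
  induction y with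
  | nil => exact ⟨[], by simp, by simp, by simp⟩
  | cons k y ih =>
    obtain ⟨v, hlen, hv, hexps⟩ := ih fun k hk => hy k (List.mem_cons_of_mem _ hk)
    have hvw : ∀ x ∈ v ++ w, x = a ∨ x = b := by
      simp only [List.mem_append]; rintro x (hx | hx) <;> simp [hv, hw, hx]
    have hhead : ∀ x ∈ (v ++ w).head?, x ≠ flip a b ((v ++ w).headD a) := by
      intro x hx
      rw [List.headD_eq_head?_getD, hx, Option.getD_some]
      exact (flip_ne_self hab (hvw x (List.mem_of_mem_head? hx))).symm
    refine ⟨List.replicate k (flip a b ((v ++ w).headD a)) ++ v, by simp [hlen], ?_, ?_⟩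
    · simp only [List.mem_append, List.mem_replicate]
      rintro x (⟨-, rfl⟩ | hx)
      exacts [flip_eq_or _, hv x hx]
    · rw [List.append_assoc, exps_replicate_append (hy k (by simp)) hhead, hexps]
      rfl

lemma mem_dropLast_cons {α : Type*} {e x : α} {T : List α} (hx : x ∈ (e :: T).dropLast) :
    x = e ∨ x ∈ T.dropLast := by
  cases T with
  | nil => simp at hx
  | cons t T => simpa [List.dropLast_cons_of_ne_nil] using hx

lemma exists_Cr1_exps_append (ha : 1 ≤ a) (hab : a < b) {u : List ℕ} (hu : Cf1 a b u)
    {c p : ℕ} {R : List (ℕ × ℕ)} (hR : runs u = (c, p) :: R)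
    {y : List ℕ} (hy : ∀ x ∈ y, x = a ∨ x = b) {e : ℕ} (he : e = a ∨ e = b) (hpe : p ≤ e) :
    ∃ v : List ℕ, y.length ≤ v.length ∧ Cr1 a b (v ++ u) ∧
      exps (v ++ u) = y ++ e :: R.map Prod.snd := by
  obtain ⟨hlet, hle, hinner⟩ := hu
  have hexps : exps u = p :: R.map Prod.snd := by simp [exps, hR]
  set w := List.replicate (e - p) c ++ u
  have hw : exps w = e :: R.map Prod.snd := by
    simp [w, exps, runs_replicate_append_of_runs_eq hR, Nat.add_sub_cancel' hpe]
  have hwlet : ∀ x ∈ w, x = a ∨ x = b := by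
    simp only [w, List.mem_append, List.mem_replicate]
    rintro x (⟨-, rfl⟩ | hx)
    exacts [hlet x (mem_of_runs_eq_cons hR), hlet x hx]
  have hy1 : ∀ k ∈ y, 1 ≤ k := fun k hk => by rcases hy k hk with rfl | rfl <;> omega
  obtain ⟨v, hlen, hv, hvw⟩ := exists_exps_append hab.ne hwlet hy1
  have hvw' : exps (v ++ w) = y ++ e :: R.map Prod.snd := by rw [hvw, hw]
  refine ⟨v ++ List.replicate (e - p) c, ?_, ?_, by simpa [w] using hvw'⟩
  · have := List.length_le_sum_of_one_le y hy1
    simp only [List.length_append]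
    omega
  rw [List.append_assoc]
  refine ⟨fun x hx => ?_, fun q hq => ?_, fun q hq => ?_⟩
  · rcases List.mem_append.mp hx with hx | hx
    exacts [hv x hx, hwlet x hx]
  · rw [hvw'] at hq
    simp only [List.mem_append, List.mem_cons] at hq
    rcases hq with hq | rfl | hq
    · rcases hy q hq with rfl | rfl <;> omega
    · rcases he with rfl | rfl <;> omega
    · exact hle q (by simp [hexps, hq])
  · rw [hvw', List.dropLast_append_of_ne_nil (List.cons_ne_nil _ _), List.mem_append] at hq
    rcases hq with hq | hq
    · exact hy q hq
    rcases mem_dropLast_cons hq with rfl | hq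
    · exact he
    · exact hinner q (by simpa [hexps] using hq)

lemma length_cut_lt (ha : 1 ≤ a) {p : ℕ} (hp : 1 ≤ p) : (cut a b p).length < p := by
  unfold cut; split_ifs <;> simp <;> omega

lemma exists_exps_eq_cons {u : List ℕ} (hu : u ≠ []) :
    ∃ c p R, runs u = (c, p) :: R ∧ exps u = p :: R.map Prod.snd := by
  obtain ⟨c, t, rfl⟩ := List.exists_cons_of_ne_nil hu
  obtain ⟨p, R, hR⟩ := exists_runs_cons c t
  exact ⟨c, p, R, hR, by simp [exps, hR]⟩

lemma length_Df_lt (ha : 1 ≤ a) {u : List ℕ} (hu : u ≠ []) : (Df a b u).length < u.length := by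
  obtain ⟨c, p, R, -, hexps⟩ := exists_exps_eq_cons hu
  have hpos := one_le_of_mem_exps (u := u)
  have hsum := sum_exps u
  rw [hexps] at hpos hsum
  have hp := length_cut_lt (b := b) ha (hpos p (by simp))
  rcases List.eq_nil_or_concat' (R.map Prod.snd) with hT | ⟨X, q, hT⟩
  · rw [Df_of_exps_eq_singleton (by rw [hexps, hT])]
    simp [hT] at hsum
    omega
  · rw [Df_of_exps_eq_cons_concat (by rw [hexps, hT])]
    rw [hT] at hpos hsum
    have hq := length_cut_lt (b := b) ha (hpos q (by simp))
    have hX := List.length_le_sum_of_one_le X fun x hx => hpos x (by simp [hx])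
    simp only [List.sum_cons, List.sum_append] at hsum
    simp only [List.length_append]
    omega

lemma exists_Dr_append_eq (ha : 1 ≤ a) (hab : a < b) {u : List ℕ} (hu : Cf1 a b u)
    (hu0 : u ≠ []) {z : List ℕ} (hz : ∀ x ∈ z, x = a ∨ x = b) (hz0 : z ≠ []) :
    ∃ v : List ℕ, z.length ≤ v.length + 1 ∧ Cr1 a b (v ++ u) ∧
      Dr a b (v ++ u) = z ++ Df a b u := by
  obtain ⟨c, p, R, hR, hexps⟩ := exists_exps_eq_cons hu0
  have hpb : p ≤ b := hu.2.1 p (by simp [hexps])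
  rcases List.eq_nil_or_concat' (R.map Prod.snd) with hT | ⟨X, q, hT⟩
  · obtain ⟨v, hv, hvu, hvexps⟩ := exists_Cr1_exps_append ha hab hu hR hz
      (e := if p ≤ a then a else b) (by split_ifs <;> simp) (by split_ifs <;> omega)
    refine ⟨v, by omega, hvu, ?_⟩
    rw [Dr_of_exps_eq_concat (by rw [hvexps, hT]), Df_of_exps_eq_singleton (by rw [hexps, hT])]
    unfold cut
    split_ifs <;> first | rfl | omega
  · obtain ⟨y, e, hye⟩ := (List.eq_nil_or_concat' (z ++ cut a b p)).resolve_left (by simp [hz0])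
    have hzc : ∀ x ∈ z ++ cut a b p, x = a ∨ x = b := by
      intro x hx
      rcases List.mem_append.mp hx with hx | hx
      · exact hz x hx
      · unfold cut at hx; split_ifs at hx <;> simp_all
    have he : e = a ∨ e = b := hzc e (by simp [hye])
    have hpe : p ≤ e := by
      by_cases hpa : p ≤ a
      · rcases he with rfl | rfl <;> omega
      · simp only [cut, hpa, if_false] at hye
        obtain rfl : b = e := List.singleton_inj.mp (List.append_inj' hye rfl).2
        exact hpb
    obtain ⟨v, hv, hvu, hvexps⟩ := exists_Cr1_exps_append ha hab hu hR (y := y)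
      (fun x hx => hzc x (by simp [hye, hx])) he hpe
    refine ⟨v, ?_, hvu, ?_⟩
    · have := congrArg List.length hye
      simp only [List.length_append, List.length_singleton] at this
      omega
    rw [Dr_of_exps_eq_concat (X := y ++ e :: X) (p := q) (by rw [hvexps, hT]; simp),
      Df_of_exps_eq_cons_concat (by rw [hexps, hT]),
      show z ++ (cut a b p ++ X ++ cut a b q) = (z ++ cut a b p) ++ X ++ cut a b q by simp, hye]
    simp

lemma FSmooth.Df {u : List ℕ} (hu : FSmooth a b u) : FSmooth a b (Df a b u) :=
  fun n => hu (n + 1)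

lemma RSmooth.of_Dr {w : List ℕ} (hw : Cr1 a b w) (hDw : RSmooth a b (Dr a b w)) :
    RSmooth a b w
  | 0 => hw
  | n + 1 => hDw n

lemma rsmooth_nil : RSmooth a b [] := by
  intro n
  rw [Function.iterate_fixed (rfl : Dr a b [] = []) n]
  exact ⟨by simp, by simp [exps, runs], by simp [exps, runs]⟩

lemma exists_length_le_rsmooth (ha : 1 ≤ a) (hab : a < b) (N : ℕ) :
    ∃ v : List ℕ, N ≤ v.length ∧ RSmooth a b v := by
  induction N with
  | zero => exact ⟨[], le_rfl, rsmooth_nil⟩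
  | succ N ih =>
    obtain ⟨z, hz, hzs⟩ := ih
    have hR : runs (List.replicate a a) = [(a, a)] := by
      simpa [runs] using runs_replicate_append (t := []) ha (by simp)
    obtain ⟨v, hv, hvu, hvexps⟩ := exists_Cr1_exps_append ha hab (y := z)
      ⟨by simp, by simp [exps, hR, hab.le], by simp [exps, hR]⟩ hR (hzs 0).1 (.inl rfl) le_rfl
    refine ⟨v ++ List.replicate a a, by simp; omega, RSmooth.of_Dr hvu ?_⟩
    rwa [Dr_of_exps_eq_concat (by simpa using hvexps), cut, if_pos le_rfl, List.append_nil]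

theorem exists_length_le_rsmooth_append (ha : 1 ≤ a) (hab : a < b) {u : List ℕ}
    (hu : FSmooth a b u) (N : ℕ) : ∃ v : List ℕ, N ≤ v.length ∧ RSmooth a b (v ++ u) := by
  induction hl : u.length using Nat.strong_induction_on generalizing u N with
  | _ n ih =>
  rcases eq_or_ne u [] with rfl | hu0
  · simpa using exists_length_le_rsmooth ha hab N
  obtain ⟨z, hz, hzs⟩ := ih _ (hl ▸ length_Df_lt ha hu0) hu.Df (N + 1) rfl
  have hz0 : z ≠ [] := by rintro rfl; simp at hz
  obtain ⟨v, hv, hvu, hDr⟩ := exists_Dr_append_eq ha hab (hu 0) hu0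
    (fun x hx => (hzs 0).1 x (List.mem_append_left _ hx)) hz0
  exact ⟨v, by omega, RSmooth.of_Dr hvu (hDr ▸ hzs)⟩

theorem stmt10 (a b : ℕ) (ha : 1 ≤ a) (hab : a < b) (u : List ℕ)
    (hu : FSmooth a b u) :
    ∃ v : List ℕ, a + b ≤ v.length ∧ RSmooth a b (v ++ u) :=
  exists_length_le_rsmooth_append ha hab hu (a + b)

end SmoothWords
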